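/- arXiv:1909.05931 — 7 statements merged into one kernel-verified Lean document; each statement's English description precedes it below -/
import Mathlib

section
/- Let A = [[λ₁, e^{iφ}|λ₂−λ₁|cot θ], [0, λ₂]] with λ₁ ≠ λ₂, θ ∈ (0, π/2], φ ∈ [0, 2π). Then the numerical abscissa of A equals √(|λ₁−λ₂|²(1 + 2cot²θ) + Re[(λ₁−λ₂)²]) / (2√2) + Re(λ₁+λ₂)/2. -/
open scoped Matrix
open Complex Real

/-- The numerical range of a square complex matrix. -/
def numRange {N : ℕ} (M : Matrix (Fin N) (Fin N) ℂ) : Set ℂ :=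
  {z | ∃ x : EuclideanSpace ℂ (Fin N), ‖x‖ = 1 ∧ star (x : Fin N → ℂ) ⬝ᵥ M.mulVec x = z}

/-- The numerical abscissa of a square complex matrix. -/
noncomputable def numAbs {N : ℕ} (M : Matrix (Fin N) (Fin N) ℂ) : ℝ :=
  sSup {r : ℝ | ∃ x : EuclideanSpace ℂ (Fin N), ‖x‖ = 1 ∧ (star (x : Fin N → ℂ) ⬝ᵥ M.mulVec x).re = r}

/-- The spectral (operator 2-)norm of a square complex matrix. -/
noncomputable def spec2 {N : ℕ} (M : Matrix (Fin N) (Fin N) ℂ) : ℝ :=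
  ‖Matrix.toEuclideanCLM (𝕜 := ℂ) M‖

/-- The squared Frobenius norm of a square complex matrix. -/
noncomputable def frobSq {N : ℕ} (M : Matrix (Fin N) (Fin N) ℂ) : ℝ :=
  ∑ i, ∑ j, ‖M i j‖ ^ 2

/-!
For a unit vector `x` with `p = ‖x 0‖`, `q = ‖x 1‖`, the real part of `x* [[a, c], [0, d]] x` is at most
`(Re a + Re d)/2 + t (p² - q²) + (‖c‖/2) (2pq)` with `t = (Re a - Re d)/2`. Since `(p² - q², 2pq)` is a
unit vector, Cauchy–Schwarz bounds this by `√(t² + (‖c‖/2)²)`, and equality is attained at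
`x = (cos (β/2), e^{-i arg c} sin (β/2))` where `β` is the polar angle of `(t, ‖c‖/2)`. For the
given matrix `‖c‖ = |λ₁ - λ₂| cot θ`, and `|δ|² + Re δ² = 2 (Re δ)²` turns the radicand into the stated one.
-/

theorem mul_add_mul_le_sqrt_sq_add_sq {t s u v : ℝ} (huv : u ^ 2 + v ^ 2 = 1) :
    t * u + s * v ≤ √(t ^ 2 + s ^ 2) := by
  apply Real.le_sqrt_of_sq_le
  nlinarith [sq_nonneg (t * v - s * u)]

theorem exists_mul_cos_add_mul_sin_eq_sqrt (t s : ℝ) :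
    ∃ β : ℝ, t * Real.cos β + s * Real.sin β = √(t ^ 2 + s ^ 2) := by
  set z : ℂ := t + s * Complex.I
  refine ⟨z.arg, ?_⟩
  have hcos : ‖z‖ * Real.cos z.arg = t := (Complex.norm_mul_cos_arg z).trans (by simp [z])
  have hsin : ‖z‖ * Real.sin z.arg = s := (Complex.norm_mul_sin_arg z).trans (by simp [z])
  rw [← Complex.norm_add_mul_I t s]
  linear_combination -Real.cos z.arg * hcos - Real.sin z.arg * hsin +
    ‖z‖ * Real.sin_sq_add_cos_sq z.arg

theorem re_star_dotProduct_mulVec_upperTriangular (a c d : ℂ) (x : Fin 2 → ℂ) :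
    (star x ⬝ᵥ !![a, c; 0, d] *ᵥ x).re =
      a.re * ‖x 0‖ ^ 2 + d.re * ‖x 1‖ ^ 2 + (c * (starRingEnd ℂ (x 0) * x 1)).re := by
  simp only [dotProduct, Pi.star_apply, RCLike.star_def, Matrix.cons_mulVec, Fin.sum_univ_two,
    Matrix.cons_val_zero, Matrix.cons_val_one, Matrix.cons_val_fin_one, zero_mul, zero_add,
    Matrix.empty_mulVec, add_re, mul_re, conj_re, conj_im, add_im, mul_im, Complex.sq_norm, normSq_apply]
  ring

theorem EuclideanSpace.norm_sq_eq_fin_two {𝕜 : Type*} [RCLike 𝕜] (x : EuclideanSpace 𝕜 (Fin 2)) :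
    ‖x‖ ^ 2 = ‖x 0‖ ^ 2 + ‖x 1‖ ^ 2 := by
  simp [EuclideanSpace.norm_sq_eq, Fin.sum_univ_two]

theorem Complex.mul_exp_neg_arg_mul_I (c : ℂ) : c * Complex.exp (-(c.arg * Complex.I)) = ‖c‖ := by
  nth_rw 1 [← Complex.norm_mul_exp_arg_mul_I c]
  rw [mul_assoc, ← Complex.exp_add, add_neg_cancel, Complex.exp_zero, mul_one]

theorem numAbs_upperTriangular (a c d : ℂ) :
    numAbs !![a, c; 0, d] = (a.re + d.re) / 2 + √(((a.re - d.re) / 2) ^ 2 + (‖c‖ / 2) ^ 2) := by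
  refine IsGreatest.csSup_eq ⟨?_, ?_⟩
  · obtain ⟨β, hβ⟩ := exists_mul_cos_add_mul_sin_eq_sqrt ((a.re - d.re) / 2) (‖c‖ / 2)
    set u := Real.cos (β / 2)
    set v := Real.sin (β / 2)
    set w := Complex.exp (-(c.arg * Complex.I))
    set x : EuclideanSpace ℂ (Fin 2) := !₂[(u : ℂ), v * w]
    have hw : ‖w‖ = 1 := by simp [w, Complex.norm_exp]
    have hx0 : ‖x 0‖ ^ 2 = u ^ 2 := by simp [x]
    have hx1 : ‖x 1‖ ^ 2 = v ^ 2 := by simp [x, hw]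
    have hcross : c * (starRingEnd ℂ (x 0) * x 1) = ((u * v * ‖c‖ : ℝ) : ℂ) := by
      simp only [x, Matrix.cons_val_zero, Matrix.cons_val_one, Complex.conj_ofReal]
      rw [mul_left_comm, mul_left_comm c, Complex.mul_exp_neg_arg_mul_I]
      push_cast; ring
    have hcos : Real.cos β = u ^ 2 - v ^ 2 := by
      rw [← Real.cos_two_mul', mul_div_cancel₀ β two_ne_zero]
    have hsin : Real.sin β = 2 * v * u := by
      rw [← Real.sin_two_mul, mul_div_cancel₀ β two_ne_zero]
    have hunit : u ^ 2 + v ^ 2 = 1 := Real.cos_sq_add_sin_sq _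
    refine ⟨x, ?_, ?_⟩
    · rw [← pow_eq_one_iff_of_nonneg (norm_nonneg _) two_ne_zero,
        EuclideanSpace.norm_sq_eq_fin_two, hx0, hx1, hunit]
    · rw [re_star_dotProduct_mulVec_upperTriangular, hx0, hx1, hcross, Complex.ofReal_re]
      rw [hcos, hsin] at hβ
      linear_combination hβ + (a.re + d.re) / 2 * hunit
  · rintro _ ⟨x, hx, rfl⟩
    have hx2 : ‖x 0‖ ^ 2 + ‖x 1‖ ^ 2 = 1 := by
      rw [← EuclideanSpace.norm_sq_eq_fin_two, hx, one_pow]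
    have hcross : (c * (starRingEnd ℂ (x 0) * x 1)).re ≤ ‖c‖ * (‖x 0‖ * ‖x 1‖) :=
      (Complex.re_le_norm _).trans_eq (by rw [norm_mul, norm_mul, Complex.norm_conj])
    have hbound := mul_add_mul_le_sqrt_sq_add_sq (t := (a.re - d.re) / 2) (s := ‖c‖ / 2)
      (u := ‖x 0‖ ^ 2 - ‖x 1‖ ^ 2) (v := 2 * (‖x 0‖ * ‖x 1‖))
      (by linear_combination (‖x 0‖ ^ 2 + ‖x 1‖ ^ 2 + 1) * hx2)
    rw [re_star_dotProduct_mulVec_upperTriangular]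
    linear_combination hcross + hbound + (a.re + d.re) / 2 * hx2

theorem Real.cot_nonneg {θ : ℝ} (h0 : 0 ≤ θ) (hπ : θ ≤ π / 2) : 0 ≤ Real.cot θ := by
  rw [Real.cot_eq_cos_div_sin]
  exact div_nonneg (cos_nonneg_of_mem_Icc ⟨by linarith [pi_pos], hπ⟩)
    (sin_nonneg_of_nonneg_of_le_pi h0 (by linarith [pi_pos]))

theorem Complex.sq_norm_add_re_sq (z : ℂ) : ‖z‖ ^ 2 + (z ^ 2).re = 2 * z.re ^ 2 := by
  rw [Complex.sq_norm, Complex.normSq_apply, sq, Complex.mul_re]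
  ring

theorem stmt4_general (lam1 lam2 : ℂ)
    (θ φ : ℝ) (hθ : θ ∈ Set.Ioc 0 (Real.pi / 2))
    (A : Matrix (Fin 2) (Fin 2) ℂ)
    (hA : A = !![lam1, Complex.exp (Complex.I * (φ : ℂ)) *
        ((‖lam2 - lam1‖ * Real.cot θ : ℝ) : ℂ); 0, lam2]) :
    numAbs A =
      Real.sqrt (‖lam1 - lam2‖ ^ 2 * (1 + 2 * Real.cot θ ^ 2) +
          (((lam1 - lam2) ^ 2).re)) / (2 * Real.sqrt 2) +
        (lam1 + lam2).re / 2 := by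
  have hcot : 0 ≤ Real.cot θ := Real.cot_nonneg hθ.1.le hθ.2
  have hentry : ‖Complex.exp (Complex.I * φ) * ((‖lam2 - lam1‖ * Real.cot θ : ℝ) : ℂ)‖ =
      ‖lam1 - lam2‖ * Real.cot θ := by
    rw [norm_mul, mul_comm Complex.I, Complex.norm_exp_ofReal_mul_I, one_mul, Complex.norm_real,
      Real.norm_of_nonneg (by positivity), norm_sub_rev]
  have hradicand : ‖lam1 - lam2‖ ^ 2 * (1 + 2 * Real.cot θ ^ 2) + ((lam1 - lam2) ^ 2).re =
      (2 * √2) ^ 2 * (((lam1.re - lam2.re) / 2) ^ 2 + (‖lam1 - lam2‖ * Real.cot θ / 2) ^ 2) := by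
    rw [mul_pow, Real.sq_sqrt zero_le_two, ← Complex.sub_re]
    linear_combination Complex.sq_norm_add_re_sq (lam1 - lam2)
  rw [hA, numAbs_upperTriangular, hentry, hradicand, Real.sqrt_mul' _ (by positivity),
    Real.sqrt_sq (by positivity), mul_div_cancel_left₀ _ (by positivity), Complex.add_re]
  ring

/-- The numerical abscissa of A = [[λ₁, e^{iφ}|λ₂−λ₁|cot θ],[0, λ₂]]. -/
theorem stmt4 (lam1 lam2 : ℂ) (hne : lam1 ≠ lam2)
    (θ φ : ℝ) (hθ : θ ∈ Set.Ioc 0 (Real.pi / 2)) (hφ : φ ∈ Set.Ico 0 (2 * Real.pi))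
    (A : Matrix (Fin 2) (Fin 2) ℂ)
    (hA : A = !![lam1, Complex.exp (Complex.I * (φ : ℂ)) *
        ((‖lam2 - lam1‖ * Real.cot θ : ℝ) : ℂ); 0, lam2]) :
    numAbs A =
      Real.sqrt (‖lam1 - lam2‖ ^ 2 * (1 + 2 * Real.cot θ ^ 2) +
          (((lam1 - lam2) ^ 2).re)) / (2 * Real.sqrt 2) +
        (lam1 + lam2).re / 2 :=
  stmt4_general lam1 lam2 θ φ hθ A hA
end

section
/- For any M ∈ ℂ^{N×N}, the right derivative of t ↦ ‖e^{Mt}‖₂ at t = 0 equals the numerical abscissa ω(M); in particular, if ω(M) > 0 then there exists t > 0 with ‖e^{Mt}‖₂ > 1. -/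
/-! For a unit vector `x`, `‖x + t • A x‖ ^ 2 = 1 + 2 t re ⟪x, A x⟫ + t ^ 2 ‖A x‖ ^ 2`, so for
`t ≥ 0` we get `1 + t ω(A) ≤ ‖1 + t • A‖ ≤ 1 + t ω(A) + O(t ^ 2)`, the lower bound by testing against
`re ⟪x, (1 + t • A) x⟫`. Since `exp (t • A) = 1 + t • A + o(t)`, the right derivative of
`‖exp (t • A)‖` at `0` is `ω(A)`, and a positive right derivative forces `‖exp (t • A)‖ > 1`
for some `t > 0`. -/

open scoped Matrix
open Complex Real

open scoped InnerProductSpace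
open Set Filter Topology Asymptotics

theorem exists_lt_of_hasDerivWithinAt_Ici_pos {f : ℝ → ℝ} {f' a : ℝ}
    (hf : HasDerivWithinAt f f' (Ici a) a) (hf' : 0 < f') : ∃ t, a < t ∧ f a < f t := by
  have hslope := (hasDerivWithinAt_iff_tendsto_slope' (s := Ioi a) (lt_irrefl a)).mp hf.Ioi_of_Ici
  obtain ⟨t, hpos, hat⟩ := ((hslope.eventually (lt_mem_nhds hf')).and self_mem_nhdsWithin).exists
  exact ⟨t, hat, (slope_pos_iff hat).mp hpos⟩

theorem HasDerivWithinAt.of_isLittleO_sub {𝕜 F : Type*} [NontriviallyNormedField 𝕜]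
    [NormedAddCommGroup F] [NormedSpace 𝕜 F] {f g : 𝕜 → F} {g' : F} {a : 𝕜} {s : Set 𝕜}
    (hg : HasDerivWithinAt g g' s a) (hfg : (fun t => f t - g t) =o[𝓝[s] a] fun t => t - a)
    (ha : f a = g a) : HasDerivWithinAt f g' s a := by
  rw [hasDerivWithinAt_iff_isLittleO] at hg ⊢
  refine (hfg.add hg).congr_left fun t => ?_
  rw [ha]
  abel

theorem isLittleO_norm_exp_smul_sub_norm_one_add_smul {𝔸 : Type*} [NormedRing 𝔸]
    [NormedAlgebra ℝ 𝔸] [CompleteSpace 𝔸] (a : 𝔸) :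
    (fun t : ℝ => ‖NormedSpace.exp (t • a)‖ - ‖1 + t • a‖) =o[𝓝 0] fun t => t := by
  have hexp := hasDerivAt_iff_isLittleO.mp (hasDerivAt_exp_smul_const (𝕂 := ℝ) a 0)
  simp only [zero_smul, NormedSpace.exp_zero, one_mul, sub_zero] at hexp
  refine IsBigO.trans_isLittleO (.of_bound 1 (.of_forall fun t => ?_)) hexp
  rw [one_mul, Real.norm_eq_abs, sub_sub]
  exact abs_norm_sub_norm_le _ _

variable {E : Type*} [NormedAddCommGroup E] [InnerProductSpace ℂ E]

theorem re_inner_real_smul_right (x y : E) (t : ℝ) : (⟪x, t • y⟫_ℂ).re = t * (⟪x, y⟫_ℂ).re := by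
  rw [RCLike.real_smul_eq_coe_smul (K := ℂ), inner_smul_real_right, Complex.smul_re, smul_eq_mul]

namespace ContinuousLinearMap

noncomputable def numericalAbscissa (A : E →L[ℂ] E) : ℝ :=
  sSup {r | ∃ x : E, ‖x‖ = 1 ∧ (⟪x, A x⟫_ℂ).re = r}

variable (A : E →L[ℂ] E)

theorem re_inner_apply_le_norm {x : E} (hx : ‖x‖ = 1) : (⟪x, A x⟫_ℂ).re ≤ ‖A‖ :=
  calc (⟪x, A x⟫_ℂ).re ≤ ‖x‖ * ‖A x‖ := (Complex.re_le_norm _).trans (norm_inner_le_norm _ _)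
    _ ≤ ‖A‖ := by simpa [hx] using A.le_opNorm x

theorem re_inner_apply_le_numericalAbscissa {x : E} (hx : ‖x‖ = 1) :
    (⟪x, A x⟫_ℂ).re ≤ A.numericalAbscissa :=
  le_csSup ⟨‖A‖, by rintro _ ⟨y, hy, rfl⟩; exact A.re_inner_apply_le_norm hy⟩ ⟨x, hx, rfl⟩

theorem numericalAbscissa_le [Nontrivial E] {c : ℝ} (h : ∀ x : E, ‖x‖ = 1 → (⟪x, A x⟫_ℂ).re ≤ c) :
    A.numericalAbscissa ≤ c := by
  obtain ⟨x, hx⟩ := exists_norm_eq E zero_le_one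
  exact csSup_le ⟨_, x, hx, rfl⟩ (by rintro _ ⟨y, hy, rfl⟩; exact h y hy)

theorem numericalAbscissa_of_subsingleton [Subsingleton E] : A.numericalAbscissa = 0 := by
  have hempty : {r | ∃ x : E, ‖x‖ = 1 ∧ (⟪x, A x⟫_ℂ).re = r} = ∅ :=
    Set.eq_empty_of_forall_notMem fun r ⟨x, hx, _⟩ => by simp [Subsingleton.elim x 0] at hx
  rw [numericalAbscissa, hempty, Real.sSup_empty]

theorem one_add_mul_numericalAbscissa_le_norm [Nontrivial E] {t : ℝ} (ht : 0 ≤ t) :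
    1 + t * A.numericalAbscissa ≤ ‖1 + t • A‖ := by
  rcases ht.eq_or_lt with rfl | ht
  · simp
  rw [← le_sub_iff_add_le', mul_comm, ← le_div_iff₀ ht]
  refine A.numericalAbscissa_le fun x hx => ?_
  rw [le_div_iff₀ ht, le_sub_iff_add_le']
  have hB := (1 + t • A).re_inner_apply_le_norm hx
  rw [add_apply, one_apply_eq_self, smul_apply, inner_add_right, Complex.add_re,
    re_inner_real_smul_right, mul_comm] at hB
  simpa [hx] using hB

theorem norm_add_real_smul_apply_le {x : E} (hx : ‖x‖ = 1) {t : ℝ} (ht : 0 ≤ t) :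
    ‖x + t • A x‖ ≤ 1 + t * A.numericalAbscissa + ‖A‖ ^ 2 / 2 * t ^ 2 := by
  have hsq : ‖x + t • A x‖ ^ 2 ≤ 1 + 2 * (t * A.numericalAbscissa) + ‖A‖ ^ 2 * t ^ 2 := by
    rw [norm_add_sq (𝕜 := ℂ), RCLike.re_to_complex, re_inner_real_smul_right, hx, one_pow,
      norm_smul, Real.norm_of_nonneg ht]
    have hre := A.re_inner_apply_le_numericalAbscissa hx
    have hAx : ‖A x‖ ≤ ‖A‖ := by simpa [hx] using A.le_opNorm x
    rw [mul_pow, mul_comm (t ^ 2)]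
    gcongr
  -- AM-GM: `2 ‖y‖ ≤ 1 + ‖y‖ ^ 2`
  nlinarith [sq_nonneg (‖x + t • A x‖ - 1)]

theorem norm_one_add_real_smul_le [Nontrivial E] {t : ℝ} (ht : 0 ≤ t) :
    ‖1 + t • A‖ ≤ 1 + t * A.numericalAbscissa + ‖A‖ ^ 2 / 2 * t ^ 2 := by
  obtain ⟨x, hx⟩ := exists_norm_eq E zero_le_one
  refine opNorm_le_of_unit_norm ((norm_nonneg _).trans (A.norm_add_real_smul_apply_le hx ht))
    fun y hy => ?_
  simpa using A.norm_add_real_smul_apply_le hy ht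

theorem hasDerivWithinAt_norm_one_add_real_smul [Nontrivial E] :
    HasDerivWithinAt (fun t : ℝ => ‖1 + t • A‖) A.numericalAbscissa (Ici 0) 0 := by
  rw [hasDerivWithinAt_iff_isLittleO]
  have hbound : ∀ᶠ t in 𝓝[≥] (0 : ℝ),
      ‖‖1 + t • A‖ - ‖1 + (0 : ℝ) • A‖ - (t - 0) • A.numericalAbscissa‖ ≤
        ‖A‖ ^ 2 / 2 * ‖t ^ 2‖ := by
    filter_upwards [self_mem_nhdsWithin] with t (ht : 0 ≤ t)
    have hlow := A.one_add_mul_numericalAbscissa_le_norm ht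
    have hup := A.norm_one_add_real_smul_le ht
    rw [zero_smul, add_zero, norm_one, sub_zero, smul_eq_mul, Real.norm_of_nonneg (sq_nonneg t),
      Real.norm_of_nonneg (by linarith)]
    linarith
  simpa using (IsBigO.of_bound _ hbound).trans_isLittleO
    ((isLittleO_pow_id one_lt_two).mono nhdsWithin_le_nhds)

variable [CompleteSpace E]

theorem hasDerivWithinAt_norm_exp_real_smul :
    HasDerivWithinAt (fun t : ℝ => ‖NormedSpace.exp (t • A)‖) A.numericalAbscissa (Ici 0) 0 := by
  cases subsingleton_or_nontrivial E
  · rw [A.numericalAbscissa_of_subsingleton]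
    simpa [Subsingleton.elim _ (0 : E →L[ℂ] E)]
      using hasDerivWithinAt_const (0 : ℝ) (Ici 0) (0 : ℝ)
  refine A.hasDerivWithinAt_norm_one_add_real_smul.of_isLittleO_sub ?_ (by simp)
  simpa using (isLittleO_norm_exp_smul_sub_norm_one_add_smul A).mono nhdsWithin_le_nhds

theorem exists_one_lt_norm_exp_real_smul (hA : 0 < A.numericalAbscissa) :
    ∃ t : ℝ, 0 < t ∧ 1 < ‖NormedSpace.exp (t • A)‖ := by
  cases subsingleton_or_nontrivial E
  · exact absurd A.numericalAbscissa_of_subsingleton hA.ne'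
  simpa using exists_lt_of_hasDerivWithinAt_Ici_pos A.hasDerivWithinAt_norm_exp_real_smul hA

end ContinuousLinearMap

section MatrixExp

-- `NormedSpace.map_exp` is stated for normed rings; any matrix norm will do, as all of them
-- induce the product topology.
attribute [local instance] Matrix.linftyOpNormedRing Matrix.linftyOpNormedAlgebra

theorem Matrix.toEuclideanCLM_exp_ofReal_smul {n : Type*} [Fintype n] [DecidableEq n]
    (M : Matrix n n ℂ) (t : ℝ) :
    Matrix.toEuclideanCLM (𝕜 := ℂ) (NormedSpace.exp ((t : ℂ) • M)) =
      NormedSpace.exp (t • Matrix.toEuclideanCLM (𝕜 := ℂ) M) := by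
  have hcont : Continuous (Matrix.toEuclideanCLM (n := n) (𝕜 := ℂ)) :=
    LinearMap.continuous_of_finiteDimensional
      (Matrix.toEuclideanCLM (n := n) (𝕜 := ℂ)).toAlgEquiv.toLinearMap
  refine (NormedSpace.map_exp _ hcont _).trans ?_
  rw [map_smul]
  rfl

end MatrixExp

theorem numAbs_eq_numericalAbscissa {N : ℕ} (M : Matrix (Fin N) (Fin N) ℂ) :
    numAbs M = (Matrix.toEuclideanCLM (𝕜 := ℂ) M).numericalAbscissa := by
  simp [numAbs, ContinuousLinearMap.numericalAbscissa, EuclideanSpace.inner_eq_star_dotProduct,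
    dotProduct_comm]

/-- The right derivative of t ↦ ‖e^{Mt}‖₂ at t = 0 is the numerical abscissa ω(M);
in particular if ω(M) > 0 then ‖e^{Mt}‖₂ > 1 for some t > 0. -/
theorem stmt7 {N : ℕ} (M : Matrix (Fin N) (Fin N) ℂ) :
    HasDerivWithinAt (fun t : ℝ => spec2 (NormedSpace.exp ((t : ℂ) • M)))
        (numAbs M) (Set.Ici 0) 0 ∧
      (0 < numAbs M →
        ∃ t : ℝ, 0 < t ∧ 1 < spec2 (NormedSpace.exp ((t : ℂ) • M))) := by
  set A := Matrix.toEuclideanCLM (𝕜 := ℂ) M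
  have hspec (t : ℝ) : spec2 (NormedSpace.exp ((t : ℂ) • M)) = ‖NormedSpace.exp (t • A)‖ :=
    congrArg norm (Matrix.toEuclideanCLM_exp_ofReal_smul M t)
  simp only [hspec, numAbs_eq_numericalAbscissa]
  exact ⟨A.hasDerivWithinAt_norm_exp_real_smul, A.exists_one_lt_norm_exp_real_smul⟩
end

section
/- Let A = [[λ₁, e^{iφ}|λ₂−λ₁|cot θ], [0, λ₂]] with λ₁ ≠ λ₂, Re(λ₁) < 0, Re(λ₂) < 0, and θ ∈ (0, π/2]. If θ < arctan(|λ₁−λ₂| / (2√(Re(λ₁)Re(λ₂)))), then there exists t > 0 with ‖e^{At}‖₂ > 1. -/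
/-!
If `0 < Re ⟪y, T y⟫`, then `t ↦ Re ⟪y, exp (t T) y⟫` starts at `‖y‖²` with positive slope, so
`‖exp (t T)‖ > 1` for small `t > 0`. For the triangular matrix `A`, with `p = -Re λ₁`,
`q = -Re λ₂` and `m = |λ₂ - λ₁| cot θ`, the vector `y = (√q, e^{-iφ} √p)` has
`Re ⟪y, A y⟫ = √(pq) (m - 2√(pq))`, and the angle condition on `θ` says precisely `m > 2√(pq)`.
-/

open scoped Matrix
open Complex Real

open scoped ComplexInnerProductSpace ComplexConjugate

theorem HasDerivAt.exists_pos_lt_of_deriv_pos {f : ℝ → ℝ} {f' x : ℝ} (hf : HasDerivAt f f' x)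
    (hf' : 0 < f') : ∃ t > 0, f x < f (x + t) := by
  obtain ⟨t, hslope, ht⟩ :=
    ((hf.tendsto_slope_zero_right.eventually (eventually_gt_nhds hf')).and
      self_mem_nhdsWithin).exists
  refine ⟨t, ht, ?_⟩
  rw [smul_eq_mul] at hslope
  have := (pos_iff_pos_of_mul_pos hslope).mp (inv_pos.mpr ht)
  linarith

theorem exists_one_lt_norm_exp_smul_of_re_inner_pos {E : Type*} [NormedAddCommGroup E]
    [InnerProductSpace ℂ E] [CompleteSpace E] (T : E →L[ℂ] E) {y : E}
    (hy : 0 < re ⟪y, T y⟫) : ∃ t : ℝ, 0 < t ∧ 1 < ‖NormedSpace.exp ((t : ℂ) • T)‖ := by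
  have hexp : HasDerivAt (fun u : ℂ => NormedSpace.exp (u • T)) T ((0 : ℝ) : ℂ) := by
    simpa using hasDerivAt_exp_smul_const T (0 : ℂ)
  have hf : HasDerivAt (fun t : ℝ => re ⟪y, NormedSpace.exp ((t : ℂ) • T) y⟫) (re ⟪y, T y⟫) 0 :=
    (((innerSL ℂ y).comp (ContinuousLinearMap.apply ℂ E y)).hasFDerivAt.comp_hasDerivAt _
      hexp).real_of_complex
  obtain ⟨t, ht, hlt⟩ := hf.exists_pos_lt_of_deriv_pos hy
  have hy2 : re ⟪y, y⟫ = ‖y‖ ^ 2 := inner_self_eq_norm_sq (𝕜 := ℂ) y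
  simp only [zero_add, ofReal_zero, zero_smul, NormedSpace.exp_zero, one_apply_eq_self, hy2] at hlt
  refine ⟨t, ht, lt_of_mul_lt_mul_left ?_ (sq_nonneg ‖y‖)⟩
  set S := NormedSpace.exp ((t : ℂ) • T)
  calc ‖y‖ ^ 2 * 1 < re ⟪y, S y⟫ := by rwa [mul_one]
    _ ≤ ‖y‖ * ‖S y‖ := re_inner_le_norm (𝕜 := ℂ) y (S y)
    _ ≤ ‖y‖ * (‖S‖ * ‖y‖) := by gcongr; exact S.le_opNorm y
    _ = ‖y‖ ^ 2 * ‖S‖ := by ring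

theorem Matrix.toEuclideanCLM_exp {𝕜 n : Type*} [RCLike 𝕜] [Fintype n] [DecidableEq n]
    (A : Matrix n n 𝕜) :
    Matrix.toEuclideanCLM (n := n) (𝕜 := 𝕜) (NormedSpace.exp A) =
      NormedSpace.exp (Matrix.toEuclideanCLM (n := n) (𝕜 := 𝕜) A) :=
  open scoped Norms.Operator in NormedSpace.map_exp (Matrix.toEuclideanCLM (n := n) (𝕜 := 𝕜))
    (LinearMap.continuous_of_finiteDimensional
      (Matrix.toEuclideanCLM (n := n) (𝕜 := 𝕜)).toAlgEquiv.toLinearMap) A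

theorem Matrix.inner_toEuclideanCLM_fin_two (a b c d u v : ℂ) :
    ⟪!₂[u, v], Matrix.toEuclideanCLM (𝕜 := ℂ) !![a, b; c, d] !₂[u, v]⟫ =
      conj u * (a * u + b * v) + conj v * (c * u + d * v) := by
  simp [PiLp.inner_apply, Fin.sum_univ_two]
  ring

theorem Real.lt_mul_cot_of_lt_arctan {c d θ : ℝ} (hc : 0 < c) (hθ : 0 < θ)
    (hθd : θ < arctan (d / c)) : c < d * cot θ := by
  have hθ' : θ < π / 2 := hθd.trans (arctan_lt_pi_div_two _)
  have htan : tan θ < d / c := by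
    simpa [tan_arctan] using
      tan_lt_tan_of_lt_of_lt_pi_div_two (by linarith) (arctan_lt_pi_div_two _) hθd
  have htan0 : 0 < tan θ := tan_pos_of_pos_of_lt_pi_div_two hθ hθ'
  rw [cot_eq_cos_div_sin, ← inv_div, ← tan_eq_sin_div_cos, ← div_eq_mul_inv, lt_div_iff₀ htan0]
  rwa [lt_div_iff₀ hc, mul_comm] at htan

theorem re_inner_toEuclideanCLM_upperTriangular (lam1 lam2 : ℂ) (φ m s r : ℝ) :
    re ⟪!₂[(s : ℂ), exp (-(I * φ)) * r],
      Matrix.toEuclideanCLM (𝕜 := ℂ) !![lam1, exp (I * φ) * m; 0, lam2]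
        !₂[(s : ℂ), exp (-(I * φ)) * r]⟫ =
      lam1.re * s ^ 2 + m * (s * r) + lam2.re * r ^ 2 := by
  have hconj : conj (exp (-(I * φ))) * exp (-(I * φ)) = 1 := by
    rw [← exp_conj, ← Complex.exp_add]; simp
  have hinv : exp (I * φ) * exp (-(I * φ)) = 1 := by
    rw [← Complex.exp_add]; simp
  have hinner : ⟪!₂[(s : ℂ), exp (-(I * φ)) * r],
      Matrix.toEuclideanCLM (𝕜 := ℂ) !![lam1, exp (I * φ) * m; 0, lam2]
        !₂[(s : ℂ), exp (-(I * φ)) * r]⟫ =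
      lam1 * (s ^ 2 : ℝ) + (m * (s * r) : ℝ) + lam2 * (r ^ 2 : ℝ) := by
    rw [Matrix.inner_toEuclideanCLM_fin_two]
    simp only [map_mul, conj_ofReal]
    push_cast
    linear_combination (m * s * r : ℂ) * hinv + (lam2 * r ^ 2) * hconj
  rw [hinner]
  simp only [add_re, re_mul_ofReal, ofReal_re]

theorem exists_re_inner_toEuclideanCLM_pos {lam1 lam2 : ℂ} (h1 : lam1.re < 0) (h2 : lam2.re < 0)
    {φ m : ℝ} (hm : 2 * √(lam1.re * lam2.re) < m) :
    ∃ y, 0 < re ⟪y, Matrix.toEuclideanCLM (𝕜 := ℂ) !![lam1, exp (I * φ) * m; 0, lam2] y⟫ := by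
  refine ⟨!₂[(√(-lam2.re) : ℂ), exp (-(I * φ)) * √(-lam1.re)], ?_⟩
  have hprod : lam1.re * lam2.re = -lam2.re * -lam1.re := by ring
  rw [re_inner_toEuclideanCLM_upperTriangular, sq_sqrt (by linarith), sq_sqrt (by linarith),
    ← sqrt_mul (by linarith), ← hprod]
  have hpos : 0 < √(lam1.re * lam2.re) := sqrt_pos.mpr (mul_pos_of_neg_of_neg h1 h2)
  nlinarith [sq_sqrt (mul_pos_of_neg_of_neg h1 h2).le]

theorem stmt8_general (lam1 lam2 : ℂ)
    (h1 : lam1.re < 0) (h2 : lam2.re < 0)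
    (θ φ : ℝ) (hθ : θ ∈ Set.Ioc 0 (Real.pi / 2))
    (A : Matrix (Fin 2) (Fin 2) ℂ)
    (hA : A = !![lam1, Complex.exp (Complex.I * (φ : ℂ)) *
        ((‖lam2 - lam1‖ * Real.cot θ : ℝ) : ℂ); 0, lam2])
    (hθlt : θ < Real.arctan (‖lam1 - lam2‖ / (2 * Real.sqrt (lam1.re * lam2.re)))) :
    ∃ t : ℝ, 0 < t ∧ 1 < spec2 (NormedSpace.exp ((t : ℂ) • A)) := by
  have hm : 2 * √(lam1.re * lam2.re) < ‖lam2 - lam1‖ * Real.cot θ := by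
    rw [norm_sub_rev]
    have hc : 0 < 2 * √(lam1.re * lam2.re) := by
      positivity [sqrt_pos.mpr (mul_pos_of_neg_of_neg h1 h2)]
    exact lt_mul_cot_of_lt_arctan hc hθ.1 hθlt
  obtain ⟨y, hy⟩ := exists_re_inner_toEuclideanCLM_pos h1 h2 (φ := φ) hm
  obtain ⟨t, ht, hgrowth⟩ := exists_one_lt_norm_exp_smul_of_re_inner_pos _ hy
  refine ⟨t, ht, ?_⟩
  rwa [spec2, hA, Matrix.toEuclideanCLM_exp, map_smul]

/-- Transient growth of the matrix exponential of A = [[λ₁, e^{iφ}|λ₂−λ₁|cot θ],[0, λ₂]]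
when the eigenvector angle θ is small enough. -/
theorem stmt8 (lam1 lam2 : ℂ) (hne : lam1 ≠ lam2)
    (h1 : lam1.re < 0) (h2 : lam2.re < 0)
    (θ φ : ℝ) (hθ : θ ∈ Set.Ioc 0 (Real.pi / 2))
    (A : Matrix (Fin 2) (Fin 2) ℂ)
    (hA : A = !![lam1, Complex.exp (Complex.I * (φ : ℂ)) *
        ((‖lam2 - lam1‖ * Real.cot θ : ℝ) : ℂ); 0, lam2])
    (hθlt : θ < Real.arctan (‖lam1 - lam2‖ / (2 * Real.sqrt (lam1.re * lam2.re)))) :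
    ∃ t : ℝ, 0 < t ∧ 1 < spec2 (NormedSpace.exp ((t : ℂ) • A)) :=
  stmt8_general lam1 lam2 h1 h2 θ φ hθ A hA hθlt
end

section
/- Let D = [[λ, 1], [0, λ]] with Re(λ) < 0. If Re(λ) > −1/2, then there exists t > 0 with ‖e^{Dt}‖₂ > 1. -/
open scoped Matrix
open Complex Real

/-!
Splitting `t • D = (tλ) • 1 + t • N` with `N² = 0` gives `e^{Dt} = e^{tλ} (1 + t N)`. On the
vector `x = (1, 1)` this yields `‖e^{Dt} x‖² = e^{2 t Re λ} ((1 + t)² + 1)`, which equals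
`2 = ‖x‖²` at `t = 0` and has derivative `4 Re λ + 2 > 0` there, so `‖e^{Dt} x‖ > ‖x‖` for
small `t > 0`.
-/

theorem exists_pos_lt_of_hasDerivAt_pos {f : ℝ → ℝ} {f' x : ℝ} (hf : HasDerivAt f f' x)
    (hf' : 0 < f') : ∃ t, 0 < t ∧ f x < f (x + t) := by
  have hslope := hf.tendsto_slope_zero_right.eventually (eventually_gt_nhds hf')
  obtain ⟨t, ht_slope, ht⟩ := (hslope.and self_mem_nhdsWithin).exists
  rw [smul_eq_mul] at ht_slope
  exact ⟨t, ht, sub_pos.1 (pos_of_mul_pos_right ht_slope (inv_nonneg.2 ht.le))⟩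

theorem exists_pos_two_lt_exp_mul_one_add_sq_add_one {a : ℝ} (ha : -(1 / 2) < a) :
    ∃ t, 0 < t ∧ 2 < Real.exp (2 * a * t) * ((1 + t) ^ 2 + 1) := by
  have hderiv : HasDerivAt (fun t => Real.exp (2 * a * t) * ((1 + t) ^ 2 + 1)) (4 * a + 2) 0 :=
    ((((hasDerivAt_id' (0 : ℝ)).const_mul (2 * a)).exp).fun_mul
      ((((hasDerivAt_id' (0 : ℝ)).const_add 1).fun_pow 2).add_const 1)).congr_deriv
      (by norm_num; ring)
  obtain ⟨t, ht, hlt⟩ := exists_pos_lt_of_hasDerivAt_pos hderiv (by linarith)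
  refine ⟨t, ht, ?_⟩
  simp only [mul_zero, Real.exp_zero, zero_add] at hlt
  linarith

theorem NormedSpace.exp_eq_one_add_of_sq_eq_zero {𝔸 : Type*} [Ring 𝔸] [Algebra ℚ 𝔸]
    [TopologicalSpace 𝔸] [IsTopologicalRing 𝔸] [T2Space 𝔸] {x : 𝔸} (hx : x ^ 2 = 0) :
    NormedSpace.exp x = 1 + x := by
  have hvanish : ∀ n ∉ Finset.range 2, (n.factorial⁻¹ : ℚ) • x ^ n = 0 := by
    intro n hn
    rw [Finset.mem_range, not_lt] at hn
    rw [← Nat.add_sub_cancel' hn, pow_add, hx, zero_mul, smul_zero]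
  rw [NormedSpace.exp_eq_tsum ℚ]
  dsimp only
  rw [tsum_eq_sum hvanish]
  simp [Finset.sum_range_succ]

theorem Matrix.exp_smul_jordanBlock_two (lam : ℂ) (t : ℝ) :
    NormedSpace.exp ((t : ℂ) • !![lam, 1; 0, lam])
      = Complex.exp (t * lam) • !![1, (t : ℂ); 0, 1] := by
  have hsplit : (t : ℂ) • !![lam, 1; 0, lam]
      = Matrix.scalar (Fin 2) ((t : ℂ) * lam) + !![0, (t : ℂ); 0, 0] := by
    ext i j; fin_cases i <;> fin_cases j <;> simp
  have hnil : (!![0, (t : ℂ); 0, 0]) ^ 2 = 0 := by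
    ext i j; fin_cases i <;> fin_cases j <;> simp [sq]
  rw [hsplit, Matrix.exp_add_of_commute _ _ (Matrix.scalar_commute _ (Commute.all _) _),
    NormedSpace.exp_eq_one_add_of_sq_eq_zero hnil, Matrix.scalar_apply, Matrix.exp_diagonal]
  ext i j; fin_cases i <;> fin_cases j <;> simp [Complex.exp_eq_exp_ℂ]

theorem one_lt_spec2_of_norm_lt {N : ℕ} {M : Matrix (Fin N) (Fin N) ℂ}
    {x : EuclideanSpace ℂ (Fin N)} (hx : ‖x‖ < ‖Matrix.toEuclideanCLM (𝕜 := ℂ) M x‖) :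
    1 < spec2 M := by
  by_contra! hM
  exact hx.not_ge <| ((Matrix.toEuclideanCLM (𝕜 := ℂ) M).le_opNorm x).trans
    (mul_le_of_le_one_left (norm_nonneg x) hM)

theorem norm_sq_exp_smul_jordanBlock_two_apply (lam : ℂ) (t : ℝ) :
    ‖Matrix.toEuclideanCLM (𝕜 := ℂ) (NormedSpace.exp ((t : ℂ) • !![lam, 1; 0, lam])) !₂[1, 1]‖ ^ 2
      = Real.exp (2 * lam.re * t) * ((1 + t) ^ 2 + 1) := by
  have hshear : Matrix.toEuclideanCLM (𝕜 := ℂ) !![1, (t : ℂ); 0, 1] !₂[1, 1]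
      = !₂[((1 + t : ℝ) : ℂ), 1] := by
    ext i; fin_cases i <;> simp [add_comm]
  rw [Matrix.exp_smul_jordanBlock_two, map_smul, smul_apply, norm_smul, mul_pow, Complex.norm_exp,
    ← Real.exp_nat_mul, hshear, EuclideanSpace.norm_sq_eq]
  congr 1
  · rw [re_ofReal_mul]
    push_cast
    ring_nf
  · simp [Fin.sum_univ_two, -ofReal_add, Complex.norm_real, sq_abs]

theorem stmt10_general (lam : ℂ) (h2 : -(1 / 2) < lam.re) :
    ∃ t : ℝ, 0 < t ∧ 1 < spec2 (NormedSpace.exp ((t : ℂ) • !![lam, 1; 0, lam])) := by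
  obtain ⟨t, ht, hgrowth⟩ := exists_pos_two_lt_exp_mul_one_add_sq_add_one h2
  refine ⟨t, ht, one_lt_spec2_of_norm_lt (x := !₂[1, 1]) ?_⟩
  have hx : ‖(!₂[1, 1] : EuclideanSpace ℂ (Fin 2))‖ ^ 2 = 2 := by
    norm_num [EuclideanSpace.norm_sq_eq, Fin.sum_univ_two]
  refine lt_of_pow_lt_pow_left₀ 2 (norm_nonneg _) ?_
  rwa [hx, norm_sq_exp_smul_jordanBlock_two_apply]

/-- Transient growth of the matrix exponential of the 2×2 Jordan block [[λ,1],[0,λ]]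
when −1/2 < Re(λ) < 0. -/
theorem stmt10 (lam : ℂ) (h1 : lam.re < 0) (h2 : -(1 / 2) < lam.re) :
    ∃ t : ℝ, 0 < t ∧ 1 < spec2 (NormedSpace.exp ((t : ℂ) • !![lam, 1; 0, lam])) :=
  stmt10_general lam h2
end

section
/- Let D = [[λ, 1], [0, λ]] with 0 < |λ| < 1. Then there exists a real s > 0 and a branch of the matrix logarithm L of D such that ‖e^{sL}‖₂ > 1; i.e., the continuous powers D^s = e^{s log D} exhibit transient growth. -/
/-! Take `L = [[log λ, λ⁻¹], [0, log λ]]`: a scalar plus a square-zero matrix, so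
`e^{sL} = e^{s log λ} (I + s λ⁻¹ E₁₂)`, with `|e^{s log λ}| = |λ|^s`. Writing `a = -log |λ| > 0`
and taking `s = 1/a`, the `(1,2)` entry has modulus `e^{-1} · e^a / a ≥ 1` since `e^{a-1} ≥ a`,
and the nonzero entry below it in the same column makes the spectral norm strictly larger. -/

open scoped Matrix
open Complex Real

theorem Matrix.exp_scalar_add_of_sq_eq_zero {n : Type*} [Fintype n] [DecidableEq n] (a : ℂ)
    {N : Matrix n n ℂ} (hN : N ^ 2 = 0) :
    NormedSpace.exp (Matrix.scalar n a + N) = Complex.exp a • (1 + N) := by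
  rw [Matrix.exp_add_of_commute _ _ (Matrix.scalar_commute a (fun _ => Commute.all _ _) N),
    NormedSpace.exp_eq_one_add_of_sq_eq_zero hN, Matrix.scalar_apply, Matrix.exp_diagonal,
    Pi.exp_def, ← Complex.exp_eq_exp_ℂ, ← smul_one_eq_diagonal, smul_one_mul]

theorem Matrix.exp_jordanBlock_two (a b : ℂ) :
    NormedSpace.exp !![a, b; 0, a] = Complex.exp a • !![1, b; 0, 1] := by
  have hN : !![0, b; 0, 0] ^ 2 = 0 := by
    ext i j; fin_cases i <;> fin_cases j <;> simp [sq]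
  have hsplit : !![a, b; 0, a] = Matrix.scalar (Fin 2) a + !![0, b; 0, 0] := by
    ext i j; fin_cases i <;> fin_cases j <;> simp
  rw [hsplit, Matrix.exp_scalar_add_of_sq_eq_zero a hN]
  congr 1
  ext i j; fin_cases i <;> fin_cases j <;> simp

theorem sqrt_sum_sq_norm_col_le_spec2 {N : ℕ} (M : Matrix (Fin N) (Fin N) ℂ) (j : Fin N) :
    √(∑ i, ‖M i j‖ ^ 2) ≤ spec2 M := by
  calc √(∑ i, ‖M i j‖ ^ 2)
      = ‖Matrix.toEuclideanCLM (𝕜 := ℂ) M (EuclideanSpace.single j 1)‖ := by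
        rw [EuclideanSpace.norm_eq]
        simp [EuclideanSpace.single, Matrix.mulVec_single]
    _ ≤ ‖Matrix.toEuclideanCLM (𝕜 := ℂ) M‖ * ‖EuclideanSpace.single j (1 : ℂ)‖ :=
        ContinuousLinearMap.le_opNorm _ _
    _ = spec2 M := by rw [PiLp.norm_single, norm_one, mul_one, spec2]

theorem norm_apply_lt_spec2 {N : ℕ} (M : Matrix (Fin N) (Fin N) ℂ) {i k j : Fin N} (hik : i ≠ k)
    (hk : M k j ≠ 0) : ‖M i j‖ < spec2 M :=
  calc ‖M i j‖ = √(‖M i j‖ ^ 2) := (Real.sqrt_sq (norm_nonneg _)).symm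
    _ < √(‖M i j‖ ^ 2 + ‖M k j‖ ^ 2) :=
      Real.sqrt_lt_sqrt (sq_nonneg _) (lt_add_of_pos_right _ (by positivity))
    _ ≤ √(∑ l, ‖M l j‖ ^ 2) :=
      Real.sqrt_le_sqrt <| Finset.add_le_sum (f := fun l => ‖M l j‖ ^ 2)
        (fun _ _ => sq_nonneg _) (Finset.mem_univ i) (Finset.mem_univ k) hik
    _ ≤ spec2 M := sqrt_sum_sq_norm_col_le_spec2 M j

theorem Real.one_le_inv_mul_exp_sub_one {a : ℝ} (ha : 0 < a) : 1 ≤ a⁻¹ * Real.exp (a - 1) := by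
  rw [le_inv_mul_iff₀ ha, mul_one]
  linarith [Real.add_one_le_exp (a - 1)]

/-- For D = [[λ,1],[0,λ]] with 0 < |λ| < 1, some continuous power D^s = e^{sL}
(for a branch L of the matrix logarithm of D) has spectral norm exceeding 1. -/
theorem stmt13 (lam : ℂ) (h0 : 0 < ‖lam‖) (h1 : ‖lam‖ < 1) :
    ∃ s : ℝ, 0 < s ∧ ∃ L : Matrix (Fin 2) (Fin 2) ℂ,
      NormedSpace.exp L = !![lam, 1; 0, lam] ∧
        1 < spec2 (NormedSpace.exp ((s : ℂ) • L)) := by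
  have hlam : lam ≠ 0 := norm_pos_iff.mp h0
  set a := -Real.log ‖lam‖ with ha_def
  have ha : 0 < a := neg_pos.mpr (Real.log_neg h0 h1)
  have hlog : Real.log ‖lam‖ = -a := by rw [ha_def, neg_neg]
  refine ⟨a⁻¹, inv_pos.mpr ha, !![Complex.log lam, lam⁻¹; 0, Complex.log lam], ?_, ?_⟩
  · rw [Matrix.exp_jordanBlock_two, Complex.exp_log hlam]
    ext i j; fin_cases i <;> fin_cases j <;> simp [hlam]
  have hsL : ((a⁻¹ : ℝ) : ℂ) • !![Complex.log lam, lam⁻¹; 0, Complex.log lam] =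
      !![a⁻¹ * Complex.log lam, a⁻¹ * lam⁻¹; 0, a⁻¹ * Complex.log lam] := by
    ext i j; fin_cases i <;> fin_cases j <;> simp
  have hexp : ‖Complex.exp ((a⁻¹ : ℝ) * Complex.log lam)‖ = Real.exp (-1) := by
    rw [Complex.norm_exp, Complex.re_ofReal_mul, Complex.log_re, hlog, mul_neg,
      inv_mul_cancel₀ ha.ne']
  have hinv : ‖lam⁻¹‖ = Real.exp a := by
    rw [norm_inv, ha_def, Real.exp_neg, Real.exp_log h0]
  rw [hsL, Matrix.exp_jordanBlock_two]
  refine lt_of_le_of_lt ?_ (norm_apply_lt_spec2 _ (i := 0) (k := 1) (j := 1) (by decide)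
    (by simp [Complex.exp_ne_zero]))
  calc 1 ≤ a⁻¹ * Real.exp (a - 1) := Real.one_le_inv_mul_exp_sub_one ha
    _ = _ := by
      simp only [Matrix.smul_apply, Matrix.of_apply, Matrix.cons_val_zero, Matrix.cons_val_one,
        smul_eq_mul, norm_mul, hexp, hinv, Complex.norm_real, Real.norm_eq_abs, abs_inv,
        abs_of_pos ha, Real.exp_sub, Real.exp_neg]
      ring
end

section
/- Let J be the M×M Jordan block (M ≥ 2) with eigenvalue λ ∈ ℂ. Then the numerical abscissa of J equals Re(λ) + cos(π/(M+1)). -/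
open scoped Matrix
open Complex Real

/-- The M×M Jordan block with eigenvalue λ. -/
def jordanBlock (M : ℕ) (lam : ℂ) : Matrix (Fin M) (Fin M) ℂ :=
  Matrix.of fun i j => if i = j then lam else if (i : ℕ) + 1 = (j : ℕ) then 1 else 0

/-!
Since `Re (x* J x) = Re λ ‖x‖² + Re ∑ conj (x k) x (k+1)`, the claim is that the quadratic form of
the path graph has top value `c = cos θ`, `θ = π/(M+1)`, with eigenvector `s k = sin (k θ)`.
Both halves come from a discrete Picone identity: if `s (k-1) + s (k+1) = 2 c s k` with
`s 0 = s (M+1) = 0`, then for `y k = s k u k`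
`c ∑ ‖y k‖² - Re ∑ conj (y k) y (k+1) = ½ ∑ s k s (k+1) ‖u k - u (k+1)‖²`,
which is nonnegative because `s > 0` on `1, …, M` and vanishes for `u` constant.
-/

open Finset
open scoped ComplexConjugate

theorem Complex.re_conj_mul_eq (a b : ℂ) :
    (conj a * b).re = (‖a‖ ^ 2 + ‖b‖ ^ 2 - ‖a - b‖ ^ 2) / 2 := by
  simp only [← Complex.normSq_eq_norm_sq, Complex.normSq_sub, Complex.mul_re, Complex.conj_re,
    Complex.conj_im]
  ring

section Chain

variable {n : ℕ} {c : ℝ} {s : ℕ → ℝ}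

theorem mul_sum_norm_sq_sub_sum_re_conj_mul (hs0 : s 0 = 0) (hsn : s (n + 1) = 0)
    (hrec : ∀ k, s k + s (k + 2) = 2 * c * s (k + 1))
    {y u : ℕ → ℂ} (hy : ∀ k ≤ n, y k = s (k + 1) * u k) :
    c * ∑ k ∈ range n, ‖y k‖ ^ 2 - ∑ k ∈ range n, (conj (y k) * y (k + 1)).re =
      (∑ k ∈ range n, s (k + 1) * s (k + 2) * ‖u k - u (k + 1)‖ ^ 2) / 2 := by
  set a : ℕ → ℝ := fun k => ‖u k‖ ^ 2
  have hterm : ∀ k ∈ range n, c * ‖y k‖ ^ 2 - (conj (y k) * y (k + 1)).re -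
      s (k + 1) * s (k + 2) * ‖u k - u (k + 1)‖ ^ 2 / 2 =
      (s k * s (k + 1) * a k - s (k + 1) * s (k + 2) * a (k + 1)) / 2 := by
    intro k hk
    have hk := mem_range.mp hk
    have hre : (conj (y k) * y (k + 1)).re =
        s (k + 1) * s (k + 2) * (conj (u k) * u (k + 1)).re := by
      rw [hy k hk.le, hy (k + 1) hk, map_mul, Complex.conj_ofReal]
      simp only [Complex.mul_re, Complex.ofReal_re, Complex.ofReal_im, Complex.mul_im]
      ring
    have hnorm : ‖y k‖ ^ 2 = s (k + 1) ^ 2 * a k := by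
      rw [hy k hk.le, norm_mul, Complex.norm_real, Real.norm_eq_abs, mul_pow, sq_abs]
    rw [hre, hnorm, Complex.re_conj_mul_eq]
    linear_combination (-(s (k + 1) * a k) / 2) * hrec k
  have htelescope : ∑ k ∈ range n, s (k + 1) * s (k + 2) * a (k + 1) =
      ∑ k ∈ range n, s k * s (k + 1) * a k := by
    have h := (sum_range_succ' (fun k => s k * s (k + 1) * a k) n).symm.trans
      (sum_range_succ (fun k => s k * s (k + 1) * a k) n)
    simpa [hs0, hsn] using h
  rw [← sub_eq_zero, sum_div, mul_sum, ← sum_sub_distrib, ← sum_sub_distrib, sum_congr rfl hterm,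
    ← sum_div, sum_sub_distrib, htelescope, sub_self, zero_div]

theorem sum_re_conj_mul_le (hs0 : s 0 = 0) (hsn : s (n + 1) = 0)
    (hrec : ∀ k, s k + s (k + 2) = 2 * c * s (k + 1)) (hpos : ∀ k < n, 0 < s (k + 1))
    {y : ℕ → ℂ} (hy : y n = 0) :
    ∑ k ∈ range n, (conj (y k) * y (k + 1)).re ≤ c * ∑ k ∈ range n, ‖y k‖ ^ 2 := by
  have hyu : ∀ k ≤ n, y k = s (k + 1) * (y k / s (k + 1)) := by
    intro k hk
    rcases hk.lt_or_eq with hk | rfl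
    · rw [mul_div_cancel₀ _ (Complex.ofReal_ne_zero.mpr (hpos k hk).ne')]
    · rw [hy, zero_div, mul_zero]
  have hweight : ∀ k < n, 0 ≤ s (k + 1) * s (k + 2) := by
    intro k hk
    rcases Nat.lt_or_ge (k + 1) n with hk' | hk'
    · exact (mul_pos (hpos k hk) (hpos (k + 1) hk')).le
    · rw [show k + 2 = n + 1 by omega, hsn, mul_zero]
  have hidentity := mul_sum_norm_sq_sub_sum_re_conj_mul hs0 hsn hrec hyu
  have hsquares : 0 ≤ ∑ k ∈ range n, s (k + 1) * s (k + 2) * ‖y k / s (k + 1) - y (k + 1) / s (k + 2)‖ ^ 2 :=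
    sum_nonneg fun k hk => mul_nonneg (hweight k (mem_range.mp hk)) (sq_nonneg _)
  linarith

theorem sum_re_conj_mul_eq (hs0 : s 0 = 0) (hsn : s (n + 1) = 0)
    (hrec : ∀ k, s k + s (k + 2) = 2 * c * s (k + 1)) {y : ℕ → ℂ}
    (hy : ∀ k ≤ n, y k = s (k + 1)) :
    ∑ k ∈ range n, (conj (y k) * y (k + 1)).re = c * ∑ k ∈ range n, ‖y k‖ ^ 2 := by
  have hidentity := mul_sum_norm_sq_sub_sum_re_conj_mul (u := 1) hs0 hsn hrec
    fun k hk => (hy k hk).trans (mul_one _).symm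
  simp only [Pi.one_apply, sub_self, norm_zero, ne_eq, OfNat.ofNat_ne_zero, not_false_eq_true,
    zero_pow, mul_zero, sum_const_zero, zero_div] at hidentity
  linarith

end Chain

theorem Real.sin_nat_mul_add_sin (θ : ℝ) (k : ℕ) :
    sin (k * θ) + sin ((k + 2 : ℕ) * θ) = 2 * cos θ * sin ((k + 1 : ℕ) * θ) := by
  have hsum : (k * θ + (k + 2 : ℕ) * θ) / 2 = (k + 1 : ℕ) * θ := by push_cast; ring
  have hdiff : (k * θ - (k + 2 : ℕ) * θ) / 2 = -θ := by push_cast; ring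
  rw [sin_add_sin, hsum, hdiff, cos_neg]
  ring

theorem Real.sin_nat_mul_pi_div_pos {n k : ℕ} (hk₀ : 0 < k) (hkn : k ≤ n) :
    0 < sin (k * (π / (n + 1))) := by
  apply sin_pos_of_pos_of_lt_pi (by positivity)
  rw [mul_div_assoc', div_lt_iff₀ (by positivity), mul_comm]
  gcongr
  exact_mod_cast Nat.lt_succ_of_le hkn

theorem numAbs_eq_of_le_of_eq {N : ℕ} {A : Matrix (Fin N) (Fin N) ℂ} {a : ℝ}
    (hle : ∀ x : EuclideanSpace ℂ (Fin N), (star x.ofLp ⬝ᵥ A *ᵥ x.ofLp).re ≤ a * ‖x‖ ^ 2)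
    {v : EuclideanSpace ℂ (Fin N)} (hv : v ≠ 0)
    (hva : (star v.ofLp ⬝ᵥ A *ᵥ v.ofLp).re = a * ‖v‖ ^ 2) :
    numAbs A = a := by
  refine IsGreatest.csSup_eq ⟨⟨(‖v‖⁻¹ : ℂ) • v, norm_smul_inv_norm hv, ?_⟩, ?_⟩
  · have hv' : ‖v‖ ≠ 0 := norm_ne_zero_iff.mpr hv
    simp only [WithLp.ofLp_smul, Matrix.mulVec_smul, dotProduct_smul, star_smul, smul_dotProduct,
      smul_eq_mul, ← mul_assoc, Complex.star_def, ← Complex.ofReal_inv, Complex.conj_ofReal,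
      ← Complex.ofReal_mul, Complex.re_ofReal_mul, hva]
    field_simp
  · rintro r ⟨x, hx, rfl⟩
    simpa [hx] using hle x

section Jordan

variable {M : ℕ}

theorem extend_val_apply_of_le (x : Fin M → ℂ) {k : ℕ} (hk : M ≤ k) :
    Function.extend Fin.val x 0 k = 0 :=
  Function.extend_apply' _ _ _ fun ⟨i, hi⟩ => (hi ▸ i.isLt).not_ge hk

theorem sum_ite_val_eq_extend (x : Fin M → ℂ) (k : ℕ) :
    ∑ j : Fin M, (if k = j then x j else 0) = Function.extend Fin.val x 0 k := by
  by_cases hk : k < M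
  · lift k to Fin M using hk
    simp [Fin.val_injective.extend_apply, Fin.val_inj]
  · rw [extend_val_apply_of_le x (not_lt.mp hk)]
    exact sum_eq_zero fun j _ => if_neg fun h : k = j => hk (h ▸ j.isLt)

theorem jordanBlock_mulVec_apply (lam : ℂ) (x : Fin M → ℂ) (i : Fin M) :
    (jordanBlock M lam *ᵥ x) i = lam * x i + Function.extend Fin.val x 0 (i + 1) := by
  have hsplit : ∀ j, jordanBlock M lam i j * x j =
      (if i = j then lam * x j else 0) + (if (i : ℕ) + 1 = j then x j else 0) := by
    intro j
    by_cases hij : i = j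
    · subst hij; simp [jordanBlock]
    · simp [jordanBlock, hij]
  simp only [Matrix.mulVec, dotProduct, hsplit, sum_add_distrib, sum_ite_eq, mem_univ, if_true,
    sum_ite_val_eq_extend]

theorem re_star_dotProduct_jordanBlock_mulVec (lam : ℂ) (x : EuclideanSpace ℂ (Fin M)) :
    (star x.ofLp ⬝ᵥ jordanBlock M lam *ᵥ x.ofLp).re = lam.re * ‖x‖ ^ 2 +
      ∑ k ∈ range M, (conj (Function.extend Fin.val x.ofLp 0 k) *
        Function.extend Fin.val x.ofLp 0 (k + 1)).re := by
  set y := Function.extend Fin.val x.ofLp 0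
  have hy : ∀ i : Fin M, y i = x i := Fin.val_injective.extend_apply _ _
  simp only [dotProduct, jordanBlock_mulVec_apply, Pi.star_apply, Complex.star_def, mul_add,
    Complex.re_sum, Complex.add_re, sum_add_distrib]
  congr 1
  · rw [EuclideanSpace.norm_sq_eq, mul_sum]
    refine sum_congr rfl fun i _ => ?_
    rw [mul_left_comm, Complex.conj_mul', ← Complex.ofReal_pow, Complex.re_mul_ofReal]
  · rw [← Fin.sum_univ_eq_sum_range (fun k => (conj (y k) * y (k + 1)).re)]
    simp only [hy]
    rfl

theorem norm_sq_eq_sum_range_extend (x : EuclideanSpace ℂ (Fin M)) :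
    ‖x‖ ^ 2 = ∑ k ∈ range M, ‖Function.extend Fin.val x.ofLp 0 k‖ ^ 2 := by
  rw [EuclideanSpace.norm_sq_eq, ← Fin.sum_univ_eq_sum_range]
  simp [Fin.val_injective.extend_apply]

end Jordan

/-- The numerical abscissa of the M×M Jordan block (M ≥ 2) with eigenvalue λ is
Re(λ) + cos(π/(M+1)). -/
theorem stmt16 (M : ℕ) (hM : 2 ≤ M) (lam : ℂ) :
    numAbs (jordanBlock M lam) = lam.re + Real.cos (Real.pi / (M + 1)) := by
  set θ := π / (M + 1)
  set s : ℕ → ℝ := fun k => sin (k * θ)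
  have hs0 : s 0 = 0 := by simp [s]
  have hsM : s (M + 1) = 0 := by
    simp only [s, θ]
    push_cast
    rw [mul_div_cancel₀ _ (by positivity), Real.sin_pi]
  have hrec : ∀ k, s k + s (k + 2) = 2 * Real.cos θ * s (k + 1) := sin_nat_mul_add_sin θ
  have hpos : ∀ k < M, 0 < s (k + 1) := fun k hk => sin_nat_mul_pi_div_pos k.succ_pos hk
  set v : EuclideanSpace ℂ (Fin M) := WithLp.toLp 2 fun i => (s (i + 1) : ℂ)
  have hv : ∀ k ≤ M, Function.extend Fin.val v.ofLp 0 k = s (k + 1) := by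
    intro k hk
    rcases hk.lt_or_eq with hk | rfl
    · exact Fin.val_injective.extend_apply _ _ ⟨k, hk⟩
    · rw [extend_val_apply_of_le _ le_rfl, hsM, Complex.ofReal_zero]
  refine numAbs_eq_of_le_of_eq (fun x => ?_) (v := v) ?_ ?_
  · rw [re_star_dotProduct_jordanBlock_mulVec, add_mul]
    gcongr
    rw [norm_sq_eq_sum_range_extend]
    exact sum_re_conj_mul_le hs0 hsM hrec hpos (extend_val_apply_of_le _ le_rfl)
  · intro hv0
    have hv0' := congrArg (fun w : EuclideanSpace ℂ (Fin M) => w ⟨0, by omega⟩) hv0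
    exact (hpos 0 (by omega)).ne' (by simpa [v] using hv0')
  · rw [re_star_dotProduct_jordanBlock_mulVec, add_mul, norm_sq_eq_sum_range_extend v,
      sum_re_conj_mul_eq hs0 hsM hrec hv]
end

section
/- Let λ₁, λ₂ be distinct negative real numbers. Then arcsin(|λ₁−λ₂| / |λ₁+λ₂|) = arctan(|λ₁−λ₂| / (2√(λ₁λ₂))); that is, the antieigenvalue angle of the normal matrix diag(λ₁, λ₂) coincides with the critical eigenvector angle for transient growth of the matrix exponential. -/
/-- For distinct negative reals λ₁, λ₂, the antieigenvalue angle
arcsin(|λ₁−λ₂|/|λ₁+λ₂|) equals the critical eigenvector angle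
arctan(|λ₁−λ₂|/(2√(λ₁λ₂))). -/
theorem stmt19 (lam1 lam2 : ℝ) (h1 : lam1 < 0) (h2 : lam2 < 0) (hne : lam1 ≠ lam2) :
    Real.arcsin (|lam1 - lam2| / |lam1 + lam2|) =
      Real.arctan (|lam1 - lam2| / (2 * Real.sqrt (lam1 * lam2))) := by
  have hprod : 0 < lam1 * lam2 := mul_pos_of_neg_of_neg h1 h2
  have hs : 0 < |lam1 + lam2| := abs_pos.mpr (by nlinarith)
  have hd : 0 < |lam1 - lam2| := abs_pos.mpr (sub_ne_zero.mpr hne)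
  have hsq : |lam1 - lam2| ^ 2 + 4 * (lam1 * lam2) = |lam1 + lam2| ^ 2 := by
    rw [sq_abs, sq_abs]; ring
  have hdlt : |lam1 - lam2| < |lam1 + lam2| := by
    nlinarith [sq_nonneg (|lam1 - lam2| + |lam1 + lam2|)]
  set x := |lam1 - lam2| / |lam1 + lam2| with hx
  have hxmem : x ∈ Set.Ioo (-(1:ℝ)) 1 := by
    constructor
    · have : 0 < x := div_pos hd hs
      linarith
    · rw [hx, div_lt_one hs]; exact hdlt
  rw [Real.arcsin_eq_arctan hxmem]
  congr 1
  have h1x : 1 - x ^ 2 = 4 * (lam1 * lam2) / |lam1 + lam2| ^ 2 := by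
    rw [hx, div_pow, eq_div_iff (by positivity), sub_mul,
      div_mul_cancel₀ _ (by positivity : (|lam1 + lam2| ^ 2 : ℝ) ≠ 0)]
    linarith
  have h4 : Real.sqrt (4 * (lam1 * lam2)) = 2 * Real.sqrt (lam1 * lam2) := by
    rw [show (4:ℝ) * (lam1 * lam2) = 2 ^ 2 * (lam1 * lam2) by ring,
      Real.sqrt_mul (by positivity), Real.sqrt_sq (by norm_num)]
  rw [h1x, Real.sqrt_div (by positivity), Real.sqrt_sq hs.le, h4, hx]
  have h2s : (0:ℝ) < 2 * Real.sqrt (lam1 * lam2) := by positivity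
  field_simp
end
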